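/- arXiv:2603.17005 — 2 statements merged into one kernel-verified Lean document; each statement's English description precedes it below -/
import Mathlib

section
/- Partial minimizer for the doubly minimized Petz Rényi lautum information (Theorem 1(g)): Let A and B be nonempty finite types, α ∈ (0,1), ρ_AB a bipartite state on A × B, and σ_A a state on A. Let N be the matrix on B given by N b b' := ∑ a, ((σ_A^α ⊗ 1_B) · ρ_AB^(1−α)) (a,b) (a,b') (the partial trace over A of (σ_A^α ⊗ 1_B) · ρ_AB^(1−α)), and assume Tr N ≠ 0. Define τ̂_B := N^(1/(1−α)) / Tr[N^(1/(1−α))]. Then for every state τ_B on B, D_α(σ_A ⊗ τ̂_B ‖ ρ_AB) ≤ D_α(σ_A ⊗ τ_B ‖ ρ_AB); that is, τ̂_B achieves the infimum of D_α(σ_A ⊗ τ_B ‖ ρ_AB) over states τ_B on B. -/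
open scoped BigOperators Kronecker ComplexOrder

noncomputable section

/-- Matrix power on the support via spectral decomposition (convention `0 ^ p = 0`);
junk value `0` for non-Hermitian matrices. -/
noncomputable def mpow {A : Type*} [Fintype A] [DecidableEq A] (X : Matrix A A ℂ) (p : ℝ) :
    Matrix A A ℂ :=
  if h : X.IsHermitian then
    (h.eigenvectorUnitary : Matrix A A ℂ) *
      Matrix.diagonal (fun i =>
        ((if h.eigenvalues i = 0 then (0 : ℝ) else (h.eigenvalues i) ^ p : ℝ) : ℂ)) *
      (star (h.eigenvectorUnitary : Matrix A A ℂ))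
  else 0

/-- Matrix logarithm via spectral decomposition (`Real.log 0 = 0`); junk value `0`
for non-Hermitian matrices. -/
noncomputable def mlog {A : Type*} [Fintype A] [DecidableEq A] (X : Matrix A A ℂ) :
    Matrix A A ℂ :=
  if h : X.IsHermitian then
    (h.eigenvectorUnitary : Matrix A A ℂ) *
      Matrix.diagonal (fun i => ((Real.log (h.eigenvalues i) : ℝ) : ℂ)) *
      (star (h.eigenvectorUnitary : Matrix A A ℂ))
  else 0

/-- A quantum state: a positive semidefinite matrix with unit trace. -/
structure MState (A : Type*) [Fintype A] [DecidableEq A] where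
  mat : Matrix A A ℂ
  posSemidef : mat.PosSemidef
  trace_one : mat.trace = 1

/-- `Q_α(ρ‖σ) = Tr[ρ^α σ^(1-α)]`. -/
noncomputable def QRenyi {A : Type*} [Fintype A] [DecidableEq A] (α : ℝ)
    (ρ σ : Matrix A A ℂ) : ℝ :=
  ((mpow ρ α * mpow σ (1 - α)).trace).re

/-- Petz Rényi divergence `D_α(ρ‖σ)`, valued in `(-∞,∞]`. -/
noncomputable def DRenyi {A : Type*} [Fintype A] [DecidableEq A] (α : ℝ)
    (ρ σ : Matrix A A ℂ) : EReal :=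
  if QRenyi α ρ σ = 0 then ⊤ else (((α - 1)⁻¹ * Real.log (QRenyi α ρ σ) : ℝ) : EReal)

-- Quantum relative entropy `D(ρ‖σ)`, valued in `(-∞,∞]`.
open Classical in
noncomputable def relEnt {A : Type*} [Fintype A] [DecidableEq A] (ρ σ : Matrix A A ℂ) : EReal :=
  if LinearMap.ker (Matrix.toLin' σ) ≤ LinearMap.ker (Matrix.toLin' ρ) then
    (((ρ * (mlog ρ - mlog σ)).trace).re : EReal)
  else ⊤

/-- Doubly minimized Petz Rényi lautum information. -/
noncomputable def Ldd {A B : Type*} [Fintype A] [DecidableEq A] [Fintype B] [DecidableEq B]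
    (α : ℝ) (ρ : Matrix (A × B) (A × B) ℂ) : EReal :=
  ⨅ (σ : MState A) (τ : MState B), DRenyi α (σ.mat ⊗ₖ τ.mat) ρ

/-- Tumula information. -/
noncomputable def Tum {A B : Type*} [Fintype A] [DecidableEq A] [Fintype B] [DecidableEq B]
    (ρ : Matrix (A × B) (A × B) ℂ) : EReal :=
  ⨅ (σ : MState A) (τ : MState B), relEnt (σ.mat ⊗ₖ τ.mat) ρ

/-- Partial trace over the first factor. -/
noncomputable def ptrA {A B : Type*} [Fintype A] (M : Matrix (A × B) (A × B) ℂ) :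
    Matrix B B ℂ :=
  Matrix.of fun b b' => ∑ a, M (a, b) (a, b')

/-- Partial trace over the second factor. -/
noncomputable def ptrB {A B : Type*} [Fintype B] (M : Matrix (A × B) (A × B) ℂ) :
    Matrix A A ℂ :=
  Matrix.of fun a a' => ∑ b, M (a, b) (a', b)

/-!
With `N` the partial trace in the statement, `Q_α(σ ⊗ τ ‖ ρ) = Re Tr[τ^α N]`. Diagonalizing
`N = V diag(m) V*` and `τ = W diag(t) W*`, this is `∑ᵢ mᵢ ∑ⱼ |(V*W)ᵢⱼ|² tⱼ^α`. The weights
`|(V*W)ᵢⱼ|²` form a doubly stochastic matrix, so concavity of `x ↦ x^α` followed by Hölder's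
inequality with exponents `1/(1-α)` and `1/α` bounds it by `(Tr N^{1/(1-α)})^{1-α}`, which is the
value attained at `τ̂`. Since `D_α` is a decreasing function of `Q_α` for `α < 1`, `τ̂` minimizes
it.
-/

open Matrix Polynomial

section SpectralCalculus

variable {n : Type*} [Fintype n] [DecidableEq n]

lemma aeval_unitary_conj_diagonal (U : unitaryGroup n ℂ) (v : n → ℂ) (q : ℂ[X]) :
    aeval ((U : Matrix n n ℂ) * diagonal v * star (U : Matrix n n ℂ)) q =
      U * diagonal (fun i => q.eval (v i)) * star (U : Matrix n n ℂ) := by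
  have hconj := aeval_algHom_apply (Unitary.conjStarAlgAut ℂ (Matrix n n ℂ) U) (diagonal v) q
  have hdiag := aeval_algHom_apply (diagonalAlgHom ℂ) v q
  simp only [Unitary.conjStarAlgAut_apply, diagonalAlgHom_apply] at hconj hdiag
  rw [hconj, hdiag, aeval_pi_apply]
  simp [aeval_def, eval₂_eq_eval_map]

theorem unitary_conj_diagonal_comp_eq {U V : unitaryGroup n ℂ} {d e : n → ℝ}
    (h : (U : Matrix n n ℂ) * diagonal (fun i => (d i : ℂ)) * star (U : Matrix n n ℂ) =
      V * diagonal (fun i => (e i : ℂ)) * star (V : Matrix n n ℂ)) (g : ℝ → ℝ) :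
    (U : Matrix n n ℂ) * diagonal (fun i => (g (d i) : ℂ)) * star (U : Matrix n n ℂ) =
      V * diagonal (fun i => (g (e i) : ℂ)) * star (V : Matrix n n ℂ) := by
  classical
  -- both sides are `q(X)` for a polynomial `q` interpolating `g` on the spectrum
  set s : Finset ℂ :=
    Finset.univ.image (fun i => (d i : ℂ)) ∪ Finset.univ.image (fun i => (e i : ℂ))
  set q := Lagrange.interpolate s id (fun z => (g z.re : ℂ))
  have hq : ∀ x : ℝ, (x : ℂ) ∈ s → q.eval (x : ℂ) = g x := fun x hx =>
    (Lagrange.eval_interpolate_at_node (v := id) _ (Set.injOn_id _) hx).trans (by simp)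
  have hd : ∀ i, q.eval (d i : ℂ) = g (d i) := fun i => hq _ (by simp [s])
  have he : ∀ i, q.eval (e i : ℂ) = g (e i) := fun i => hq _ (by simp [s])
  calc (U : Matrix n n ℂ) * diagonal (fun i => (g (d i) : ℂ)) * star (U : Matrix n n ℂ)
      = aeval ((U : Matrix n n ℂ) * diagonal (fun i => (d i : ℂ)) * star (U : Matrix n n ℂ)) q := by
        simp only [aeval_unitary_conj_diagonal, hd]
    _ = _ := by simp only [h, aeval_unitary_conj_diagonal, he]

end SpectralCalculus

section Mpow

variable {n : Type*} [Fintype n] [DecidableEq n]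

lemma isHermitian_unitary_conj_diagonal (U : unitaryGroup n ℂ) (d : n → ℝ) :
    ((U : Matrix n n ℂ) * diagonal (fun i => (d i : ℂ)) * star (U : Matrix n n ℂ)).IsHermitian :=
  isHermitian_mul_mul_conjTranspose _ (isHermitian_diagonal_of_self_adjoint _ (by ext i; simp))

lemma posSemidef_unitary_conj_diagonal (U : unitaryGroup n ℂ) {d : n → ℝ} (hd : ∀ i, 0 ≤ d i) :
    ((U : Matrix n n ℂ) * diagonal (fun i => (d i : ℂ)) * star (U : Matrix n n ℂ)).PosSemidef :=
  (PosSemidef.diagonal fun i => by simpa using hd i).mul_mul_conjTranspose_same (U : Matrix n n ℂ)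

lemma Matrix.IsHermitian.eq_unitary_conj_diagonal {X : Matrix n n ℂ} (hX : X.IsHermitian) :
    X = hX.eigenvectorUnitary * diagonal (fun i => (hX.eigenvalues i : ℂ)) *
      star (hX.eigenvectorUnitary : Matrix n n ℂ) := by
  conv_lhs => rw [hX.spectral_theorem]
  rfl

lemma Matrix.PosSemidef.exists_unitary_conj_diagonal {X : Matrix n n ℂ} (hX : X.PosSemidef) :
    ∃ (U : unitaryGroup n ℂ) (d : n → ℝ), (∀ i, 0 ≤ d i) ∧
      X = U * diagonal (fun i => (d i : ℂ)) * star (U : Matrix n n ℂ) :=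
  ⟨_, _, hX.eigenvalues_nonneg, hX.1.eq_unitary_conj_diagonal⟩

lemma mpow_unitary_conj_diagonal (U : unitaryGroup n ℂ) (d : n → ℝ) (p : ℝ) :
    mpow ((U : Matrix n n ℂ) * diagonal (fun i => (d i : ℂ)) * star (U : Matrix n n ℂ)) p =
      U * diagonal (fun i => ((if d i = 0 then 0 else d i ^ p : ℝ) : ℂ)) *
        star (U : Matrix n n ℂ) := by
  have hX := isHermitian_unitary_conj_diagonal U d
  rw [mpow, dif_pos hX]
  exact unitary_conj_diagonal_comp_eq hX.eq_unitary_conj_diagonal.symm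
    fun x => if x = 0 then 0 else x ^ p

lemma mpow_unitary_conj_diagonal_of_ne_zero (U : unitaryGroup n ℂ) (d : n → ℝ) {p : ℝ}
    (hp : p ≠ 0) :
    mpow ((U : Matrix n n ℂ) * diagonal (fun i => (d i : ℂ)) * star (U : Matrix n n ℂ)) p =
      U * diagonal (fun i => ((d i ^ p : ℝ) : ℂ)) * star (U : Matrix n n ℂ) := by
  rw [mpow_unitary_conj_diagonal]
  congr 3 with i
  split_ifs with h <;> simp [h, Real.zero_rpow hp]

lemma Matrix.PosSemidef.mpow {X : Matrix n n ℂ} (hX : X.PosSemidef) (p : ℝ) :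
    (mpow X p).PosSemidef := by
  obtain ⟨U, d, hd, rfl⟩ := hX.exists_unitary_conj_diagonal
  rw [mpow_unitary_conj_diagonal]
  refine posSemidef_unitary_conj_diagonal U fun i => ?_
  split_ifs
  exacts [le_rfl, Real.rpow_nonneg (hd i) p]

end Mpow

section Kronecker

variable {A B : Type*} [Fintype A] [DecidableEq A] [Fintype B] [DecidableEq B]

lemma conj_diagonal_kronecker (U : Matrix A A ℂ) (W : Matrix B B ℂ) (d : A → ℝ) (t : B → ℝ) :
    (U * diagonal (fun i => (d i : ℂ)) * star U) ⊗ₖ (W * diagonal (fun j => (t j : ℂ)) * star W) =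
      (U ⊗ₖ W) * diagonal (fun x => ((d x.1 * t x.2 : ℝ) : ℂ)) * star (U ⊗ₖ W) := by
  simp only [star_eq_conjTranspose, conjTranspose_kronecker, mul_kronecker_mul,
    diagonal_kronecker_diagonal, Complex.ofReal_mul]

lemma mpow_kronecker {σ : Matrix A A ℂ} {τ : Matrix B B ℂ} (hσ : σ.PosSemidef)
    (hτ : τ.PosSemidef) (p : ℝ) : mpow (σ ⊗ₖ τ) p = mpow σ p ⊗ₖ mpow τ p := by
  obtain ⟨U, d, hd, rfl⟩ := hσ.exists_unitary_conj_diagonal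
  obtain ⟨W, t, ht, rfl⟩ := hτ.exists_unitary_conj_diagonal
  have hUW := mpow_unitary_conj_diagonal ⟨_, kronecker_mem_unitary U.2 W.2⟩
    (fun x => d x.1 * t x.2) p
  simp only [conj_diagonal_kronecker, mpow_unitary_conj_diagonal] at hUW ⊢
  rw [hUW]
  congr 3 with x
  by_cases hx₁ : d x.1 = 0
  · simp [hx₁]
  by_cases hx₂ : t x.2 = 0
  · simp [hx₂]
  simp [hx₁, hx₂, Real.mul_rpow (hd _) (ht _)]

end Kronecker

section PartialTrace

variable {A B : Type*} [Fintype A]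

lemma ptrA_eq_sum_submatrix (K : Matrix (A × B) (A × B) ℂ) :
    ptrA K = ∑ a, K.submatrix (Prod.mk a) (Prod.mk a) := by
  ext b b'
  simp [ptrA, Matrix.sum_apply]

lemma Matrix.PosSemidef.ptrA {K : Matrix (A × B) (A × B) ℂ} (hK : K.PosSemidef) :
    (_root_.ptrA K).PosSemidef := by
  rw [ptrA_eq_sum_submatrix]
  exact posSemidef_sum _ fun a _ => hK.submatrix _

variable [Fintype B]

lemma ptrA_kronecker_one_mul_comm [DecidableEq B] (X : Matrix A A ℂ)
    (K : Matrix (A × B) (A × B) ℂ) :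
    ptrA ((X ⊗ₖ (1 : Matrix B B ℂ)) * K) = ptrA (K * (X ⊗ₖ (1 : Matrix B B ℂ))) := by
  ext b b'
  simp only [ptrA, of_apply, mul_apply, Fintype.sum_prod_type, kroneckerMap_apply, one_apply,
    mul_ite, ite_mul, mul_one, mul_zero, zero_mul, Finset.sum_ite_eq, Finset.sum_ite_eq',
    Finset.mem_univ, if_true]
  rw [Finset.sum_comm]
  simp only [mul_comm]

lemma trace_one_kronecker_mul [DecidableEq A] (Q : Matrix B B ℂ) (K : Matrix (A × B) (A × B) ℂ) :
    (((1 : Matrix A A ℂ) ⊗ₖ Q) * K).trace = (Q * ptrA K).trace := by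
  simp only [trace, diag_apply, mul_apply, kroneckerMap_apply, one_apply, ite_mul, one_mul,
    zero_mul, Fintype.sum_prod_type, Finset.sum_ite_irrel, Finset.sum_const_zero, Finset.sum_ite_eq,
    Finset.mem_univ, ↓reduceIte, ptrA, of_apply, Finset.mul_sum]
  rw [Finset.sum_comm]
  exact Finset.sum_congr rfl fun _ _ => Finset.sum_comm

lemma trace_kronecker_mul [DecidableEq A] [DecidableEq B] (P : Matrix A A ℂ) (Q : Matrix B B ℂ)
    (M : Matrix (A × B) (A × B) ℂ) :
    ((P ⊗ₖ Q) * M).trace = (Q * ptrA ((P ⊗ₖ (1 : Matrix B B ℂ)) * M)).trace := by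
  rw [← trace_one_kronecker_mul, ← mul_assoc, ← mul_kronecker_mul, one_mul, mul_one]

open scoped MatrixOrder in
lemma posSemidef_ptrA_kronecker_one_mul [DecidableEq A] [DecidableEq B] {P : Matrix A A ℂ}
    {M : Matrix (A × B) (A × B) ℂ} (hP : P.PosSemidef) (hM : M.PosSemidef) :
    (ptrA ((P ⊗ₖ (1 : Matrix B B ℂ)) * M)).PosSemidef := by
  obtain ⟨C, rfl⟩ := CStarAlgebra.nonneg_iff_eq_star_mul_self.mp hP.nonneg
  have hC : star C ⊗ₖ (1 : Matrix B B ℂ) = (C ⊗ₖ (1 : Matrix B B ℂ))ᴴ := by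
    rw [conjTranspose_kronecker, conjTranspose_one, star_eq_conjTranspose]
  rw [← mul_one (1 : Matrix B B ℂ), mul_kronecker_mul, mul_assoc, ptrA_kronecker_one_mul_comm,
    hC]
  exact (hM.mul_mul_conjTranspose_same _).ptrA

end PartialTrace

section TraceFormulas

variable {n : Type*} [Fintype n] [DecidableEq n]

lemma unitary_conj_diagonal_mul (U : unitaryGroup n ℂ) (a b : n → ℂ) :
    (U * diagonal a * star (U : Matrix n n ℂ)) * (U * diagonal b * star (U : Matrix n n ℂ)) =
      U * diagonal (fun i => a i * b i) * star (U : Matrix n n ℂ) := by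
  calc _ = U * diagonal a * (star (U : Matrix n n ℂ) * U) * diagonal b *
        star (U : Matrix n n ℂ) := by simp only [mul_assoc]
    _ = _ := by rw [Unitary.coe_star_mul_self, mul_one, mul_assoc (U : Matrix n n ℂ),
        diagonal_mul_diagonal]

lemma trace_unitary_conj_diagonal (U : unitaryGroup n ℂ) (a : n → ℂ) :
    (U * diagonal a * star (U : Matrix n n ℂ)).trace = ∑ i, a i := by
  rw [trace_mul_cycle, Unitary.coe_star_mul_self, one_mul, trace_diagonal]

lemma trace_conj_diagonal_mul_conj_diagonal (W V : Matrix n n ℂ) (a b : n → ℝ) :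
    ((W * diagonal (fun j => (a j : ℂ)) * star W) *
        (V * diagonal (fun i => (b i : ℂ)) * star V)).trace =
      ((∑ i, b i * ∑ j, Complex.normSq ((star V * W) i j) * a j : ℝ) : ℂ) := by
  have hcycle : ((W * diagonal (fun j => (a j : ℂ)) * star W) *
        (V * diagonal (fun i => (b i : ℂ)) * star V)).trace =
      ((star V * W) * diagonal (fun j => (a j : ℂ)) * star (star V * W) *
        diagonal (fun i => (b i : ℂ))).trace := by
    rw [star_mul, star_star]
    simp only [← mul_assoc]
    rw [trace_mul_cycle]
    simp only [← mul_assoc]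
  rw [hcycle]
  generalize star V * W = C
  simp only [trace, diag_apply, mul_diagonal]
  simp only [mul_apply (N := star C), mul_diagonal, star_apply, RCLike.star_def, Finset.sum_mul,
    Finset.mul_sum, Complex.ofReal_sum, Complex.ofReal_mul, Complex.normSq_eq_conj_mul_self]
  refine Finset.sum_congr rfl fun i _ => Finset.sum_congr rfl fun j _ => by ring

end TraceFormulas

section RpowInequalities

variable {ι : Type*} [Fintype ι] {α : ℝ}

lemma sum_mul_rpow_le_of_sum_eq_one (hα₀ : 0 < α) (hα₁ : α < 1) {m x : ι → ℝ}
    (hm : ∀ i, 0 ≤ m i) (hx : ∀ i, 0 ≤ x i) (hx₁ : ∑ i, x i = 1) :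
    ∑ i, m i * x i ^ α ≤ (∑ i, m i ^ (1 / (1 - α))) ^ (1 - α) := by
  have hpq : (1 / (1 - α)).HolderConjugate (1 / α) :=
    Real.holderConjugate_iff.mpr ⟨one_lt_one_div (by linarith) (by linarith), by simp⟩
  have hx' : ∀ i, (x i ^ α) ^ (1 / α) = x i := fun i => by
    rw [← Real.rpow_mul (hx i), mul_one_div_cancel hα₀.ne', Real.rpow_one]
  calc ∑ i, m i * x i ^ α
      ≤ (∑ i, m i ^ (1 / (1 - α))) ^ (1 / (1 / (1 - α))) *
          (∑ i, (x i ^ α) ^ (1 / α)) ^ (1 / (1 / α)) :=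
        Real.inner_le_Lp_mul_Lq_of_nonneg _ hpq (fun i _ => hm i)
          (fun i _ => Real.rpow_nonneg (hx i) α)
    _ = (∑ i, m i ^ (1 / (1 - α))) ^ (1 - α) := by
        simp only [hx', hx₁, one_div_one_div, Real.one_rpow, mul_one]

lemma sum_mul_sum_rpow_le (hα₀ : 0 < α) (hα₁ : α < 1) {w : Matrix ι ι ℝ} [DecidableEq ι]
    (hw : w ∈ doublyStochastic ℝ ι) {m t : ι → ℝ} (hm : ∀ i, 0 ≤ m i) (ht : ∀ j, 0 ≤ t j)
    (ht₁ : ∑ j, t j = 1) :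
    ∑ i, m i * ∑ j, w i j * t j ^ α ≤ (∑ i, m i ^ (1 / (1 - α))) ^ (1 - α) := by
  have hjensen : ∀ i, ∑ j, w i j * t j ^ α ≤ (w *ᵥ t) i ^ α := fun i =>
    (Real.concaveOn_rpow hα₀.le hα₁.le).le_map_sum (fun j _ => nonneg_of_mem_doublyStochastic hw)
      (sum_row_of_mem_doublyStochastic hw i) (fun j _ => ht j)
  calc ∑ i, m i * ∑ j, w i j * t j ^ α
      ≤ ∑ i, m i * (w *ᵥ t) i ^ α :=
        Finset.sum_le_sum fun i _ => mul_le_mul_of_nonneg_left (hjensen i) (hm i)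
    _ ≤ _ := sum_mul_rpow_le_of_sum_eq_one hα₀ hα₁ hm
        (fun i => Finset.sum_nonneg fun j _ =>
          mul_nonneg (nonneg_of_mem_doublyStochastic hw) (ht j))
        ((sum_mulVec_of_mem_doublyStochastic hw).trans ht₁)

lemma sum_rpow_div_rpow_mul_eq (hα₁ : α < 1) {m : ι → ℝ} (hm : ∀ i, 0 ≤ m i)
    (hT : 0 < ∑ i, m i ^ (1 / (1 - α))) :
    ∑ i, (m i ^ (1 / (1 - α)) / ∑ k, m k ^ (1 / (1 - α))) ^ α * m i =
      (∑ i, m i ^ (1 / (1 - α))) ^ (1 - α) := by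
  set T := ∑ k, m k ^ (1 / (1 - α))
  have hα : 1 - α ≠ 0 := by linarith
  have hexp : 1 / (1 - α) * α + 1 = 1 / (1 - α) := by
    field_simp
    ring
  have hexp_ne : 1 / (1 - α) * α + 1 ≠ 0 := by rw [hexp]; exact one_div_ne_zero hα
  have hterm : ∀ i, (m i ^ (1 / (1 - α)) / T) ^ α * m i = T ^ (-α) * m i ^ (1 / (1 - α)) := by
    intro i
    calc (m i ^ (1 / (1 - α)) / T) ^ α * m i = m i ^ (1 / (1 - α) * α) * m i / T ^ α := by
          rw [Real.div_rpow (Real.rpow_nonneg (hm i) _) hT.le, ← Real.rpow_mul (hm i)]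
          ring
      _ = T ^ (-α) * m i ^ (1 / (1 - α)) := by
          rw [← Real.rpow_add_one' (hm i) hexp_ne, hexp, Real.rpow_neg hT.le]
          ring
  rw [Finset.sum_congr rfl fun i _ => hterm i, ← Finset.mul_sum, Real.rpow_sub hT, Real.rpow_one,
    Real.rpow_neg hT.le]
  ring

end RpowInequalities

section VariationalFormula

variable {n : Type*} [Fintype n] [DecidableEq n] {α : ℝ}

lemma map_normSq_mem_doublyStochastic (U : unitaryGroup n ℂ) :
    (U : Matrix n n ℂ).map Complex.normSq ∈ doublyStochastic ℝ n := by
  refine mem_doublyStochastic_iff_sum.mpr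
    ⟨fun i j => Complex.normSq_nonneg _, fun i => ?_, fun j => ?_⟩
  · have h := congr_fun₂ (Unitary.coe_mul_star_self U) i i
    simp only [mul_apply, Unitary.coe_star, star_apply, RCLike.star_def, one_apply_eq,
      Complex.mul_conj] at h
    simpa using congr_arg Complex.re h
  · have h := congr_fun₂ (Unitary.coe_star_mul_self U) j j
    simp only [mul_apply, star_apply, RCLike.star_def, one_apply_eq,
      mul_comm (starRingEnd ℂ _), Complex.mul_conj] at h
    simpa using congr_arg Complex.re h

open scoped MatrixOrder in
lemma Matrix.PosSemidef.trace_mul_nonneg {X Y : Matrix n n ℂ} (hX : X.PosSemidef)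
    (hY : Y.PosSemidef) : 0 ≤ (X * Y).trace := by
  obtain ⟨C, rfl⟩ := CStarAlgebra.nonneg_iff_eq_star_mul_self.mp hY.nonneg
  rw [← mul_assoc, trace_mul_cycle, star_eq_conjTranspose]
  exact (hX.mul_mul_conjTranspose_same C).trace_nonneg

theorem re_trace_mpow_mul_le (hα₀ : 0 < α) (hα₁ : α < 1) {N : Matrix n n ℂ} (hN : N.PosSemidef)
    (τ : MState n) :
    (mpow τ.mat α * N).trace.re ≤ (mpow N (1 / (1 - α))).trace.re ^ (1 - α) := by
  obtain ⟨V, m, hm, rfl⟩ := hN.exists_unitary_conj_diagonal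
  obtain ⟨W, t, ht, hτ⟩ := τ.posSemidef.exists_unitary_conj_diagonal
  have ht₁ : ∑ j, t j = 1 := by
    have h := τ.trace_one
    rw [hτ, trace_unitary_conj_diagonal] at h
    exact_mod_cast h
  rw [hτ, mpow_unitary_conj_diagonal_of_ne_zero _ _ hα₀.ne',
    mpow_unitary_conj_diagonal_of_ne_zero _ _ (one_div_ne_zero (by linarith)),
    trace_conj_diagonal_mul_conj_diagonal, trace_unitary_conj_diagonal, Complex.ofReal_re]
  simpa using sum_mul_sum_rpow_le hα₀ hα₁ (map_normSq_mem_doublyStochastic (star V * W)) hm ht ht₁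

lemma re_trace_mpow_pos {N : Matrix n n ℂ} (hN : N.PosSemidef) (hN₀ : N.trace ≠ 0) (p : ℝ) :
    0 < (mpow N p).trace.re := by
  obtain ⟨V, m, hm, rfl⟩ := hN.exists_unitary_conj_diagonal
  obtain ⟨i, hi⟩ : ∃ i, m i ≠ 0 := by
    by_contra! h
    simp [h] at hN₀
  rw [mpow_unitary_conj_diagonal, trace_unitary_conj_diagonal, ← Complex.ofReal_sum,
    Complex.ofReal_re]
  have hpos : 0 < m i ^ p := Real.rpow_pos_of_pos ((hm i).lt_of_ne' hi) p
  refine Finset.sum_pos' (fun j _ => ?_) ⟨i, Finset.mem_univ i, by simpa [hi] using hpos⟩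
  split_ifs
  exacts [le_rfl, Real.rpow_nonneg (hm j) p]

lemma posSemidef_trace_inv_smul_mpow {N : Matrix n n ℂ} (hN : N.PosSemidef) (p : ℝ) :
    (((mpow N p).trace)⁻¹ • mpow N p).PosSemidef :=
  (hN.mpow p).smul (inv_nonneg_of_nonneg (hN.mpow p).trace_nonneg)

theorem re_trace_mpow_trace_inv_smul_mpow_mul (hα₀ : 0 < α) (hα₁ : α < 1) {N : Matrix n n ℂ}
    (hN : N.PosSemidef) (hN₀ : N.trace ≠ 0) :
    (mpow (((mpow N (1 / (1 - α))).trace)⁻¹ • mpow N (1 / (1 - α))) α * N).trace.re =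
      (mpow N (1 / (1 - α))).trace.re ^ (1 - α) := by
  have hT := re_trace_mpow_pos hN hN₀ (1 / (1 - α))
  obtain ⟨V, m, hm, rfl⟩ := hN.exists_unitary_conj_diagonal
  have hq : 1 / (1 - α) ≠ 0 := one_div_ne_zero (by linarith)
  set T := ∑ i, m i ^ (1 / (1 - α))
  have htrace : (mpow ((V : Matrix n n ℂ) * diagonal (fun i => (m i : ℂ)) * star (V : Matrix n n ℂ))
      (1 / (1 - α))).trace = T := by
    rw [mpow_unitary_conj_diagonal_of_ne_zero _ _ hq, trace_unitary_conj_diagonal,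
      Complex.ofReal_sum]
  rw [htrace, Complex.ofReal_re] at hT ⊢
  have hnormalize : (T : ℂ)⁻¹ • (V * diagonal (fun i => ((m i ^ (1 / (1 - α)) : ℝ) : ℂ)) *
      star (V : Matrix n n ℂ)) =
      V * diagonal (fun i => ((m i ^ (1 / (1 - α)) / T : ℝ) : ℂ)) * star (V : Matrix n n ℂ) := by
    rw [show (fun i => ((m i ^ (1 / (1 - α)) / T : ℝ) : ℂ)) =
        (T : ℂ)⁻¹ • fun i => ((m i ^ (1 / (1 - α)) : ℝ) : ℂ) by ext; simp [div_eq_inv_mul],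
      diagonal_smul, Matrix.mul_smul, Matrix.smul_mul]
  rw [mpow_unitary_conj_diagonal_of_ne_zero _ _ hq, hnormalize,
    mpow_unitary_conj_diagonal_of_ne_zero _ _ hα₀.ne', unitary_conj_diagonal_mul,
    trace_unitary_conj_diagonal]
  simp only [← Complex.ofReal_mul, ← Complex.ofReal_sum, Complex.ofReal_re]
  exact sum_rpow_div_rpow_mul_eq hα₁ hm hT

end VariationalFormula

lemma QRenyi_kronecker {A B : Type*} [Fintype A] [DecidableEq A] [Fintype B] [DecidableEq B]
    (α : ℝ) {σ : Matrix A A ℂ} {τ : Matrix B B ℂ} (hσ : σ.PosSemidef) (hτ : τ.PosSemidef)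
    (ρ : Matrix (A × B) (A × B) ℂ) :
    QRenyi α (σ ⊗ₖ τ) ρ =
      (mpow τ α * ptrA ((mpow σ α ⊗ₖ (1 : Matrix B B ℂ)) * mpow ρ (1 - α))).trace.re := by
  rw [QRenyi, mpow_kronecker hσ hτ, trace_kronecker_mul]

lemma DRenyi_le_DRenyi_of_QRenyi_le {A : Type*} [Fintype A] [DecidableEq A] {α : ℝ} (hα : α ≤ 1)
    {ρ σ ρ' σ' : Matrix A A ℂ} (hpos : 0 < QRenyi α ρ σ) (hnonneg : 0 ≤ QRenyi α ρ' σ')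
    (hle : QRenyi α ρ' σ' ≤ QRenyi α ρ σ) : DRenyi α ρ σ ≤ DRenyi α ρ' σ' := by
  rw [DRenyi, DRenyi, if_neg hpos.ne']
  split_ifs with h
  · exact le_top
  · exact EReal.coe_le_coe_iff.mpr <| mul_le_mul_of_nonpos_left
      (Real.log_le_log (hnonneg.lt_of_ne' h) hle) (inv_nonpos.mpr (by linarith))

theorem partial_minimizer_Ldd_general {A B : Type*} [Fintype A] [DecidableEq A]
    [Fintype B] [DecidableEq B]
    (α : ℝ) (hα : α ∈ Set.Ioo (0 : ℝ) 1)
    (ρ : MState (A × B)) (σ : MState A)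
    (N : Matrix B B ℂ)
    (hN : N = ptrA ((mpow σ.mat α ⊗ₖ (1 : Matrix B B ℂ)) * mpow ρ.mat (1 - α)))
    (hNtr : N.trace ≠ 0)
    (τhat : Matrix B B ℂ)
    (hτhat : τhat = ((mpow N (1 / (1 - α))).trace)⁻¹ • mpow N (1 / (1 - α))) :
    ∀ τ : MState B,
      DRenyi α (σ.mat ⊗ₖ τhat) ρ.mat ≤ DRenyi α (σ.mat ⊗ₖ τ.mat) ρ.mat := by
  intro τ
  obtain ⟨hα₀, hα₁⟩ := hα
  have hNpsd : N.PosSemidef :=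
    hN ▸ posSemidef_ptrA_kronecker_one_mul (σ.posSemidef.mpow α) (ρ.posSemidef.mpow (1 - α))
  have hτhat_psd : τhat.PosSemidef := hτhat ▸ posSemidef_trace_inv_smul_mpow hNpsd _
  have hQhat : QRenyi α (σ.mat ⊗ₖ τhat) ρ.mat = (mpow N (1 / (1 - α))).trace.re ^ (1 - α) := by
    rw [QRenyi_kronecker α σ.posSemidef hτhat_psd, ← hN, hτhat,
      re_trace_mpow_trace_inv_smul_mpow_mul hα₀ hα₁ hNpsd hNtr]
  refine DRenyi_le_DRenyi_of_QRenyi_le hα₁.le ?_ ?_ ?_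
  · rw [hQhat]
    exact Real.rpow_pos_of_pos (re_trace_mpow_pos hNpsd hNtr _) _
  · rw [QRenyi_kronecker α σ.posSemidef τ.posSemidef, ← hN]
    exact (Complex.nonneg_iff.mp ((τ.posSemidef.mpow α).trace_mul_nonneg hNpsd)).1
  · rw [hQhat, QRenyi_kronecker α σ.posSemidef τ.posSemidef, ← hN]
    exact re_trace_mpow_mul_le hα₀ hα₁ hNpsd τ

/-- Partial minimizer for the doubly minimized Petz Rényi lautum information
(Theorem 1(g)). -/
theorem partial_minimizer_Ldd {A B : Type*} [Fintype A] [DecidableEq A] [Nonempty A]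
    [Fintype B] [DecidableEq B] [Nonempty B]
    (α : ℝ) (hα : α ∈ Set.Ioo (0 : ℝ) 1)
    (ρ : MState (A × B)) (σ : MState A)
    (N : Matrix B B ℂ)
    (hN : N = ptrA ((mpow σ.mat α ⊗ₖ (1 : Matrix B B ℂ)) * mpow ρ.mat (1 - α)))
    (hNtr : N.trace ≠ 0)
    (τhat : Matrix B B ℂ)
    (hτhat : τhat = ((mpow N (1 / (1 - α))).trace)⁻¹ • mpow N (1 / (1 - α))) :
    ∀ τ : MState B,
      DRenyi α (σ.mat ⊗ₖ τhat) ρ.mat ≤ DRenyi α (σ.mat ⊗ₖ τ.mat) ρ.mat :=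
  partial_minimizer_Ldd_general α hα ρ σ N hN hNtr τhat hτhat
end
end

section
/- Tumula information of pure states (Theorem 2(c)): Let A and B be nonempty finite types and ψ : A × B → ℂ a unit vector (∑ (a,b), ‖ψ (a,b)‖² = 1), and let ρ_AB be the pure state with entries ρ_AB (a,b) (a',b') := ψ (a,b) · conj (ψ (a',b')). (i) If there exist u : A → ℂ and v : B → ℂ with ψ (a,b) = u a · v b for all a, b, then T(A:B)_ρ = 0. (ii) If no such u, v exist, then D(σ_A ⊗ τ_B ‖ ρ_AB) = +∞ for every state σ_A on A and every state τ_B on B, i.e., T(A:B)_ρ = +∞. -/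
open scoped BigOperators Kronecker ComplexOrder

noncomputable section

/-! The kernel of a pure state `ρ = ψψᴴ` is `ψ^⊥`, so the support condition in `D(ω‖ρ)` forces a
Hermitian unit-trace `ω` to vanish on `ψ^⊥`, i.e. `ω = ρ`. Hence `D(σ ⊗ τ‖ρ)` is `0` when
`σ ⊗ τ = ρ` and `+∞` otherwise, and `σ ⊗ τ = ψψᴴ` happens exactly when `ψ` is a product vector:
one nonzero column of `σ ⊗ τ` exhibits the factors, and conversely the normalised pure states of
the factors of `ψ` tensor to `ρ`. -/

open Matrix

theorem Matrix.mul_eq_zero_of_ker_toLin'_le {R l m n k : Type*} [CommRing R] [Fintype m]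
    [DecidableEq m] [Fintype k] [DecidableEq k] {P : Matrix l m R} {M : Matrix n m R}
    {N : Matrix m k R} (h : LinearMap.ker (toLin' P) ≤ LinearMap.ker (toLin' M))
    (hPN : P * N = 0) : M * N = 0 := by
  have hN : LinearMap.range (toLin' N) ≤ LinearMap.ker (toLin' P) :=
    LinearMap.range_le_ker_iff.2 (by rw [← toLin'_mul, hPN, map_zero])
  apply toLin'.injective
  rw [toLin'_mul, map_zero, ← LinearMap.range_le_ker_iff]
  exact hN.trans h

section RankOne

variable {R n : Type*} [CommRing R] [StarRing R] [Fintype n] [DecidableEq n]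

/-- With `P = ψψᴴ`, the kernel condition gives `M = MP`, Hermiticity gives `M = PM`,
hence `M = PMP`. -/
theorem Matrix.IsHermitian.eq_smul_vecMulVec_of_ker_le {M : Matrix n n R} (hM : M.IsHermitian)
    {ψ : n → R} (hψ : star ψ ⬝ᵥ ψ = 1)
    (h : LinearMap.ker (toLin' (vecMulVec ψ (star ψ))) ≤ LinearMap.ker (toLin' M)) :
    M = (star ψ ⬝ᵥ M *ᵥ ψ) • vecMulVec ψ (star ψ) := by
  set P := vecMulVec ψ (star ψ)
  have hPP : P * P = P := by simp only [P, vecMulVec_mul_vecMulVec, hψ, one_smul]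
  have hMP : M * P = M := by
    have := mul_eq_zero_of_ker_toLin'_le h (N := 1 - P) (by rw [mul_sub, mul_one, hPP, sub_self])
    rwa [mul_sub, mul_one, sub_eq_zero, eq_comm] at this
  have hPM : P * M = M := by
    have hP : Pᴴ = P := by simp only [P, conjTranspose_vecMulVec, star_star]
    rw [← hP, ← hM.eq, ← conjTranspose_mul, hMP]
  calc M = P * M * P := by rw [hPM, hMP]
    _ = (star ψ ⬝ᵥ M *ᵥ ψ) • P := by
      rw [vecMulVec_mul, vecMulVec_mul_vecMulVec, ← dotProduct_mulVec, vecMulVec_smul]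

theorem Matrix.IsHermitian.eq_vecMulVec_of_ker_le {M : Matrix n n R} (hM : M.IsHermitian)
    (htr : M.trace = 1) {ψ : n → R} (hψ : star ψ ⬝ᵥ ψ = 1)
    (h : LinearMap.ker (toLin' (vecMulVec ψ (star ψ))) ≤ LinearMap.ker (toLin' M)) :
    M = vecMulVec ψ (star ψ) := by
  have hM' := hM.eq_smul_vecMulVec_of_ker_le hψ h
  set c := star ψ ⬝ᵥ M *ᵥ ψ
  have hc : c = 1 := by
    rw [← htr, hM', trace_smul, trace_vecMulVec, dotProduct_comm ψ, hψ, smul_eq_mul, mul_one]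
  rwa [hc, one_smul] at hM'

end RankOne

theorem relEnt_self {n : Type*} [Fintype n] [DecidableEq n] (ρ : Matrix n n ℂ) :
    relEnt ρ ρ = 0 := by
  simp [relEnt]

theorem relEnt_vecMulVec {n : Type*} [Fintype n] [DecidableEq n] {M : Matrix n n ℂ}
    (hM : M.IsHermitian) (htr : M.trace = 1) {ψ : n → ℂ} (hψ : star ψ ⬝ᵥ ψ = 1) :
    relEnt M (vecMulVec ψ (star ψ)) = if M = vecMulVec ψ (star ψ) then 0 else ⊤ := by
  split_ifs with hMψ
  · rw [hMψ, relEnt_self]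
  · exact if_neg fun h => hMψ (hM.eq_vecMulVec_of_ker_le htr hψ h)

theorem exists_eq_mul_of_vecMulVec_eq_kronecker {R A B : Type*} [Field R] [StarRing R]
    {ψ : A × B → R} (hψ : ψ ≠ 0) {X : Matrix A A R} {Y : Matrix B B R}
    (h : vecMulVec ψ (star ψ) = X ⊗ₖ Y) :
    ∃ (u : A → R) (v : B → R), ∀ a b, ψ (a, b) = u a * v b := by
  obtain ⟨⟨a₀, b₀⟩, hψ₀⟩ := Function.ne_iff.1 hψ
  have hψ₀' : star (ψ (a₀, b₀)) ≠ 0 := star_ne_zero.2 hψ₀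
  refine ⟨fun a => X a a₀, fun b => Y b b₀ / star (ψ (a₀, b₀)), fun a b => ?_⟩
  have hab := congr_fun₂ h (a, b) (a₀, b₀)
  simp only [vecMulVec_apply, Pi.star_apply, kroneckerMap_apply] at hab
  rw [← mul_div_assoc, ← hab, mul_div_cancel_right₀ _ hψ₀']

theorem dotProduct_star_self_eq_one_of_sum_norm_sq {n : Type*} [Fintype n] {ψ : n → ℂ}
    (hψ : ∑ p, ‖ψ p‖ ^ 2 = 1) : star ψ ⬝ᵥ ψ = 1 := by
  simp only [dotProduct, Pi.star_apply, RCLike.star_def, Complex.conj_mul']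
  exact_mod_cast hψ

theorem star_dotProduct_self_tensor {A B : Type*} [Fintype A] [Fintype B] (u : A → ℂ)
    (v : B → ℂ) :
    star (fun p : A × B => u p.1 * v p.2) ⬝ᵥ (fun p => u p.1 * v p.2) =
      (star u ⬝ᵥ u) * (star v ⬝ᵥ v) := by
  simp only [dotProduct, Fintype.sum_prod_type, Finset.sum_mul_sum, Pi.star_apply, star_mul']
  exact Finset.sum_congr rfl fun a _ => Finset.sum_congr rfl fun b _ => by ring

namespace MState

def kron {A B : Type*} [Fintype A] [DecidableEq A] [Fintype B] [DecidableEq B]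
    (σ : MState A) (τ : MState B) : MState (A × B) where
  mat := σ.mat ⊗ₖ τ.mat
  posSemidef := σ.posSemidef.kronecker τ.posSemidef
  trace_one := by rw [trace_kronecker, σ.trace_one, τ.trace_one, mul_one]

variable {n : Type*} [Fintype n] [DecidableEq n]

def pure (w : n → ℂ) (hw : w ≠ 0) : MState n where
  mat := (star w ⬝ᵥ w)⁻¹ • vecMulVec w (star w)
  posSemidef :=
    (posSemidef_vecMulVec_self_star w).smul (inv_nonneg_of_nonneg (dotProduct_star_self_nonneg w))
  trace_one := by
    rw [trace_smul, trace_vecMulVec, dotProduct_comm w, smul_eq_mul,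
      inv_mul_cancel₀ (dotProduct_star_self_eq_zero.not.2 hw)]

theorem pure_mat_of_dotProduct_eq_one {w : n → ℂ} (hw : w ≠ 0) (hw1 : star w ⬝ᵥ w = 1) :
    (pure w hw).mat = vecMulVec w (star w) := by
  simp only [pure, hw1, inv_one, one_smul]

theorem pure_kronecker_pure {A B : Type*} [Fintype A] [DecidableEq A] [Fintype B]
    [DecidableEq B] {u : A → ℂ} {v : B → ℂ} (hu : u ≠ 0) (hv : v ≠ 0)
    (huv : (fun p : A × B => u p.1 * v p.2) ≠ 0) :
    (pure u hu).mat ⊗ₖ (pure v hv).mat = (pure _ huv).mat := by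
  ext ⟨a, b⟩ ⟨a', b'⟩
  simp only [pure, star_dotProduct_self_tensor, kroneckerMap_apply, Matrix.smul_apply,
    vecMulVec_apply, Pi.star_apply, smul_eq_mul, mul_inv, star_mul']
  ring

end MState

theorem tumula_pure_state_general {A B : Type*} [Fintype A] [DecidableEq A]
    [Fintype B] [DecidableEq B]
    (ψ : A × B → ℂ) (hψ : ∑ p : A × B, ‖ψ p‖ ^ 2 = 1)
    (ρ : Matrix (A × B) (A × B) ℂ)
    (hρ : ρ = Matrix.of fun p q => ψ p * (starRingEnd ℂ) (ψ q)) :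
    ((∃ (u : A → ℂ) (v : B → ℂ), ∀ a b, ψ (a, b) = u a * v b) → Tum ρ = 0) ∧
      ((¬ ∃ (u : A → ℂ) (v : B → ℂ), ∀ a b, ψ (a, b) = u a * v b) →
        (∀ (σ : MState A) (τ : MState B), relEnt (σ.mat ⊗ₖ τ.mat) ρ = ⊤) ∧ Tum ρ = ⊤) := by
  have hψ1 := dotProduct_star_self_eq_one_of_sum_norm_sq hψ
  have hψ0 : ψ ≠ 0 := by rintro rfl; simp at hψ1
  replace hρ : ρ = vecMulVec ψ (star ψ) := hρ
  have hrel (σ : MState A) (τ : MState B) :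
      relEnt (σ.mat ⊗ₖ τ.mat) ρ = if σ.mat ⊗ₖ τ.mat = ρ then 0 else ⊤ :=
    hρ ▸ relEnt_vecMulVec (σ.kron τ).posSemidef.isHermitian (σ.kron τ).trace_one hψ1
  refine ⟨fun ⟨u, v, huv⟩ => le_antisymm ?_ ?_, fun hprod => ?_⟩
  · obtain rfl : ψ = fun p => u p.1 * v p.2 := funext fun p => huv p.1 p.2
    have hu : u ≠ 0 := by rintro rfl; exact hψ0 (by ext; simp)
    have hv : v ≠ 0 := by rintro rfl; exact hψ0 (by ext; simp)
    refine iInf₂_le_of_le (MState.pure u hu) (MState.pure v hv) ?_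
    rw [MState.pure_kronecker_pure hu hv hψ0, MState.pure_mat_of_dotProduct_eq_one hψ0 hψ1, ← hρ,
      relEnt_self]
  · exact le_iInf₂ fun σ τ => by rw [hrel]; split_ifs <;> simp
  · have hall (σ : MState A) (τ : MState B) : relEnt (σ.mat ⊗ₖ τ.mat) ρ = ⊤ := by
      rw [hrel, if_neg]
      intro h
      exact hprod (exists_eq_mul_of_vecMulVec_eq_kronecker hψ0 (hρ ▸ h).symm)
    exact ⟨hall, by simpa only [Tum, iInf_eq_top] using hall⟩

/-- Tumula information of pure states (Theorem 2(c)): it is `0` for product pure states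
and `+∞` otherwise. -/
theorem tumula_pure_state {A B : Type*} [Fintype A] [DecidableEq A] [Nonempty A]
    [Fintype B] [DecidableEq B] [Nonempty B]
    (ψ : A × B → ℂ) (hψ : ∑ p : A × B, ‖ψ p‖ ^ 2 = 1)
    (ρ : Matrix (A × B) (A × B) ℂ)
    (hρ : ρ = Matrix.of fun p q => ψ p * (starRingEnd ℂ) (ψ q)) :
    ((∃ (u : A → ℂ) (v : B → ℂ), ∀ a b, ψ (a, b) = u a * v b) → Tum ρ = 0) ∧
      ((¬ ∃ (u : A → ℂ) (v : B → ℂ), ∀ a b, ψ (a, b) = u a * v b) →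
        (∀ (σ : MState A) (τ : MState B), relEnt (σ.mat ⊗ₖ τ.mat) ρ = ⊤) ∧ Tum ρ = ⊤) :=
  tumula_pure_state_general ψ hψ ρ hρ

end
end
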